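/- arXiv:2004.08898 — 7 statements merged into one kernel-verified Lean document; each statement's English description precedes it below -/
import Mathlib

section
/- Let N_o > 0 and σ² > N_o. For α ∈ (0,1) define P₁₁(α) = (N_o/(N_o + σ²(1−α)))^{N_o/(σ²(1−α))} and P₁₀(α) = 1 − P₁₁(α). Then for every α ∈ (0, 1 − N_o/σ²) one has P₁₁(α) > P₁₀(α), i.e., P₁₁(α) > 1/2. Moreover P₁₁(α) = 1/2 exactly when σ²(1−α) = N_o. -/
open Real in
/-- Auxiliary: comparison of `(No/(No+t))^(No/t)` with `1/2`, in terms of `t` vs `No`. -/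
private lemma aux_half_lt (No t : ℝ) (hNo : 0 < No) (ht : No < t) :
    (1 : ℝ) / 2 < (No / (No + t)) ^ (No / t) := by
  have ht0 : 0 < t := hNo.trans ht
  set u : ℝ := t / No with hu
  have hu1 : 1 < u := (one_lt_div hNo).2 ht
  have hu0 : 0 < u := zero_lt_one.trans hu1
  have hbern : 1 + u < 2 ^ u := by
    have := one_add_mul_self_lt_rpow_one_add (s := 1) (p := u) (by norm_num) one_ne_zero hu1
    norm_num at this
    linarith
  have h1u : (0:ℝ) < 1 + u := by linarith
  have h2u : (0:ℝ) < (2:ℝ) ^ u := Real.rpow_pos_of_pos two_pos u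
  have hbase : ((1:ℝ)/2) ^ u < No / (No + t) := by
    have h1 : ((1:ℝ)/2) ^ u = ((2:ℝ) ^ u)⁻¹ := by
      rw [one_div, Real.inv_rpow (by norm_num)]
    have h2 : No / (No + t) = (1 + u)⁻¹ := by
      rw [hu]; field_simp
    rw [h1, h2]
    exact inv_strictAnti₀ h1u hbern
  have hinv : No / t = u⁻¹ := by rw [hu]; field_simp
  have hkey : (((1:ℝ)/2) ^ u) ^ (u⁻¹) < (No / (No + t)) ^ (u⁻¹) :=
    Real.rpow_lt_rpow (Real.rpow_nonneg (by norm_num) u) hbase (inv_pos.2 hu0)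
  have hhalf : (((1:ℝ)/2) ^ u) ^ (u⁻¹) = 1/2 := by
    rw [← Real.rpow_mul (by norm_num), mul_inv_cancel₀ hu0.ne', Real.rpow_one]
  rw [hinv]
  calc (1:ℝ)/2 = (((1:ℝ)/2) ^ u) ^ (u⁻¹) := hhalf.symm
    _ < (No / (No + t)) ^ (u⁻¹) := hkey

open Real in
private lemma aux_lt_half (No t : ℝ) (hNo : 0 < No) (ht0 : 0 < t) (ht : t < No) :
    (No / (No + t)) ^ (No / t) < (1 : ℝ) / 2 := by
  set u : ℝ := t / No with hu
  have hu1 : u < 1 := (div_lt_one hNo).2 ht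
  have hu0 : 0 < u := div_pos ht0 hNo
  have hbern : (2:ℝ) ^ u < 1 + u := by
    have := rpow_one_add_lt_one_add_mul_self (s := 1) (p := u) (by norm_num) one_ne_zero
      hu0 hu1
    norm_num at this
    linarith
  have h1u : (0:ℝ) < 1 + u := by linarith
  have h2u : (0:ℝ) < (2:ℝ) ^ u := Real.rpow_pos_of_pos two_pos u
  have hbase : No / (No + t) < ((1:ℝ)/2) ^ u := by
    have h1 : ((1:ℝ)/2) ^ u = ((2:ℝ) ^ u)⁻¹ := by
      rw [one_div, Real.inv_rpow (by norm_num)]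
    have h2 : No / (No + t) = (1 + u)⁻¹ := by
      rw [hu]; field_simp
    rw [h1, h2]
    exact inv_strictAnti₀ h2u hbern
  have hinv : No / t = u⁻¹ := by rw [hu]; field_simp
  have hpos : 0 ≤ No / (No + t) := by positivity
  have hkey : (No / (No + t)) ^ (u⁻¹) < (((1:ℝ)/2) ^ u) ^ (u⁻¹) :=
    Real.rpow_lt_rpow hpos hbase (inv_pos.2 hu0)
  have hhalf : (((1:ℝ)/2) ^ u) ^ (u⁻¹) = 1/2 := by
    rw [← Real.rpow_mul (by norm_num), mul_inv_cancel₀ hu0.ne', Real.rpow_one]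
  rw [hinv]
  calc (No / (No + t)) ^ (u⁻¹) < (((1:ℝ)/2) ^ u) ^ (u⁻¹) := hkey
    _ = 1/2 := hhalf

/-- for σ² > N_o and α ∈ (0, 1 − N_o/σ²), P₁₁(α) > P₁₀(α),
i.e. P₁₁(α) > 1/2; moreover P₁₁(α) = 1/2 exactly when σ²(1−α) = N_o. -/
theorem P11_dominates_P10 (No σ2 : ℝ) (hNo : 0 < No) (hσ : No < σ2) :
    (∀ α : ℝ, 0 < α → α < 1 - No / σ2 →
      ((No / (No + σ2 * (1 - α))) ^ (No / (σ2 * (1 - α))) >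
        1 - (No / (No + σ2 * (1 - α))) ^ (No / (σ2 * (1 - α))) ∧
       (No / (No + σ2 * (1 - α))) ^ (No / (σ2 * (1 - α))) > 1 / 2)) ∧
    (∀ α : ℝ, 0 < α → α < 1 →
      ((No / (No + σ2 * (1 - α))) ^ (No / (σ2 * (1 - α))) = 1 / 2 ↔
        σ2 * (1 - α) = No)) := by
  have hσ0 : 0 < σ2 := hNo.trans hσ
  constructor
  · intro α hα0 hα1
    have ht : No < σ2 * (1 - α) := by
      have : No / σ2 < 1 - α := by linarith
      calc No = σ2 * (No / σ2) := by field_simp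
        _ < σ2 * (1 - α) := by exact (mul_lt_mul_iff_right₀ hσ0).2 this
    have h := aux_half_lt No (σ2 * (1 - α)) hNo ht
    exact ⟨by linarith, by linarith⟩
  · intro α hα0 hα1
    have ht0 : 0 < σ2 * (1 - α) := by
      have : 0 < 1 - α := by linarith
      positivity
    constructor
    · intro h
      by_contra hne
      rcases lt_or_gt_of_ne hne with hlt | hgt
      · exact absurd h (ne_of_lt (aux_lt_half No _ hNo ht0 hlt))
      · exact absurd h (ne_of_gt (aux_half_lt No _ hNo hgt))
    · intro h
      rw [h]
      have : No / (No + No) = 1/2 := by rw [← two_mul, mul_comm]; rw [div_mul_eq_div_div, div_self hNo.ne']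
      rw [this, div_self hNo.ne', Real.rpow_one]
end

section
/- Let N_o > 0 and σ² > 0. For α ∈ [0,1) define δ = σ²(1−α)/N_o, P₀₁(α) = (1+δ)^{−(1+δ)/δ} and P₁₀(α) = 1 − (1+δ)^{−1/δ}. Then for every α ∈ [0,1) one has P₀₁(α) < P₁₀(α). -/
lemma key_ineq (δ : ℝ) (hδ : 0 < δ) :
    (1 + δ) ^ (-((1 + δ) / δ)) < 1 - (1 + δ) ^ (-(1 / δ)) := by
  have h1 : (0:ℝ) < 1 + δ := by linarith
  set L := Real.log (1 + δ) with hL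
  have hLpos : 0 < L := Real.log_pos (by linarith)
  set u := L / δ with hu
  have hu0 : 0 < u := div_pos hLpos hδ
  have hx : (1 + δ) ^ (-(1 / δ)) = Real.exp (-u) := by
    rw [Real.rpow_def_of_pos h1, hu, hL]
    ring_nf
  have hLHS : (1 + δ) ^ (-((1 + δ) / δ)) = Real.exp (-u) / (1 + δ) := by
    have hsplit : -((1 + δ) / δ) = -(1 / δ) + (-1) := by
      field_simp
      ring
    rw [hsplit, Real.rpow_add h1, hx, Real.rpow_neg_one]
    rw [div_eq_mul_inv]
  have hlog : δ / (1 + δ) ≤ L := by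
    have h := Real.log_le_sub_one_of_pos (inv_pos.2 h1)
    rw [Real.log_inv] at h
    have h2 : (1 + δ)⁻¹ - 1 = -(δ / (1 + δ)) := by
      field_simp
      ring
    rw [h2] at h
    linarith
  have hdle : δ ≤ L * (1 + δ) := by
    rw [div_le_iff₀ h1] at hlog
    exact hlog
  have hexp : (2 + δ) / (1 + δ) < Real.exp u := by
    have hstep : (2 + δ) / (1 + δ) ≤ 1 + u := by
      rw [div_le_iff₀ h1]
      have hu1 : 1 ≤ u * (1 + δ) := by
        rw [hu, div_mul_eq_mul_div, le_div_iff₀ hδ, one_mul]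
        linarith
      nlinarith
    have := Real.add_one_lt_exp (ne_of_gt hu0)
    linarith
  have hpos2 : (0:ℝ) < (2 + δ) / (1 + δ) := div_pos (by linarith) h1
  have hy : Real.exp (-u) < (1 + δ) / (2 + δ) := by
    rw [Real.exp_neg]
    rw [inv_lt_iff_one_lt_mul₀ (Real.exp_pos u)] at *
    · rw [div_mul_eq_mul_div, lt_div_iff₀ (by linarith : (0:ℝ) < 2 + δ)]
      calc (1:ℝ) * (2 + δ) = ((2 + δ) / (1 + δ)) * (1 + δ) := by field_simp
        _ < Real.exp u * (1 + δ) := by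
            exact mul_lt_mul_of_pos_right hexp h1
        _ ≤ (1 + δ) * Real.exp u := by ring_nf; exact le_refl _
  rw [hLHS, hx]
  set y := Real.exp (-u) with hy'
  have hy0 : 0 < y := Real.exp_pos _
  have hkey : y * (2 + δ) < 1 + δ := by
    rw [lt_div_iff₀ (by linarith : (0:ℝ) < 2 + δ)] at hy
    linarith
  rw [div_lt_iff₀ h1]
  nlinarith

/-- with δ = σ²(1−α)/N_o, P₀₁(α) = (1+δ)^{−(1+δ)/δ} is smaller
than P₁₀(α) = 1 − (1+δ)^{−1/δ}, for every α ∈ [0,1). -/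
theorem P01_lt_P10 (No σ2 : ℝ) (hNo : 0 < No) (hσ : 0 < σ2) :
    ∀ α : ℝ, 0 ≤ α → α < 1 →
      (1 + σ2 * (1 - α) / No) ^ (-((1 + σ2 * (1 - α) / No) / (σ2 * (1 - α) / No)))
        < 1 - (1 + σ2 * (1 - α) / No) ^ (-(1 / (σ2 * (1 - α) / No))) := by
  intro α hα0 hα1
  exact key_ineq _ (div_pos (mul_pos hσ (by linarith)) hNo)
end

section
/- Let N_o > 0, let M ≥ 2 be an integer, and for α ∈ (0,1) define N_{B1}(α) = N_o + 1 − α, ℓ(α) = 2√α·sin(π/M), and P_{3,avg}(α) = 2N_{B1}(α)/(4N_{B1}(α) + ℓ(α)²). Then P_{3,avg} is strictly decreasing on (0,1). -/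
/-- P_{3,avg}(α) = 2N_{B1}/(4N_{B1} + ℓ²) with
N_{B1}(α) = N_o + 1 − α and ℓ(α) = 2√α·sin(π/M) is strictly decreasing on (0,1). -/
theorem P3avg_strictAnti (No : ℝ) (hNo : 0 < No) (M : ℕ) (hM : 2 ≤ M) :
    StrictAntiOn (fun α : ℝ =>
      2 * (No + 1 - α) /
        (4 * (No + 1 - α) + (2 * Real.sqrt α * Real.sin (Real.pi / M)) ^ 2))
      (Set.Ioo 0 1) := by
  intro x hx y hy hxy
  obtain ⟨hx0, hx1⟩ := hx
  obtain ⟨hy0, hy1⟩ := hy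
  set c := Real.sin (Real.pi / M) with hc
  have hMpos : (0 : ℝ) < M := by positivity
  have hcpos : 0 < c := by
    apply Real.sin_pos_of_pos_of_lt_pi
    · positivity
    · calc Real.pi / M ≤ Real.pi / 2 := by
            apply div_le_div_of_nonneg_left Real.pi_pos.le (by norm_num)
            exact_mod_cast hM
        _ < Real.pi := by linarith [Real.pi_pos]
  have hsq : ∀ z : ℝ, 0 ≤ z → (2 * Real.sqrt z * c) ^ 2 = 4 * z * c ^ 2 := by
    intro z hz
    have := Real.sq_sqrt hz
    ring_nf
    nlinarith [Real.sq_sqrt hz]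
  simp only [hsq x hx0.le, hsq y hy0.le]
  have hdx : 0 < 4 * (No + 1 - x) + 4 * x * c ^ 2 := by nlinarith
  have hdy : 0 < 4 * (No + 1 - y) + 4 * y * c ^ 2 := by nlinarith
  rw [div_lt_div_iff₀ hdy hdx]
  nlinarith [mul_pos (mul_pos hcpos hcpos) (sub_pos.mpr hxy), hNo]
end

section
/- Let N_o > 0, let M ≥ 2 be an integer, set ς = cos(π/M), and for α ∈ (0,1) define d²(α) = 1 + α − 2√α·cos(π/M) and P^c_{2,avg}(α) = 4·d²(α)·N_o² / (4·d²(α)·N_o² + (N_o + 1 − α)(1 − α)²). Then P^c_{2,avg} is strictly increasing on the interval (ς², 1). -/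
set_option maxHeartbeats 1000000 in
/-- P^c_{2,avg}(α) = 4d²(α)N_o²/(4d²(α)N_o² + (N_o+1−α)(1−α)²)
with d²(α) = 1 + α − 2√α·cos(π/M) is strictly increasing on (ς², 1),
where ς = cos(π/M). -/
theorem P2cavg_strictMono (No : ℝ) (hNo : 0 < No) (M : ℕ) (hM : 2 ≤ M) :
    StrictMonoOn (fun α : ℝ =>
      4 * (1 + α - 2 * Real.sqrt α * Real.cos (Real.pi / M)) * No ^ 2 /
        (4 * (1 + α - 2 * Real.sqrt α * Real.cos (Real.pi / M)) * No ^ 2 +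
          (No + 1 - α) * (1 - α) ^ 2))
      (Set.Ioo ((Real.cos (Real.pi / M)) ^ 2) 1) := by
  set c := Real.cos (Real.pi / M) with hcdef
  have hM2 : (2 : ℝ) ≤ (M : ℝ) := by exact_mod_cast hM
  have hpiM : Real.pi / M ≤ Real.pi / 2 :=
    div_le_div_of_nonneg_left Real.pi_pos.le (by norm_num) hM2
  have hpi0 : (0:ℝ) < Real.pi / M := by positivity
  have hc0 : 0 ≤ c := Real.cos_nonneg_of_mem_Icc ⟨by linarith [Real.pi_pos], hpiM⟩
  have hc1 : c ≤ 1 := Real.cos_le_one _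
  intro x hx y hy hxy
  obtain ⟨hx1, hx2⟩ := hx
  obtain ⟨hy1, hy2⟩ := hy
  have hx0 : 0 ≤ x := le_trans (sq_nonneg c) hx1.le
  have hy0 : 0 ≤ y := le_trans (sq_nonneg c) hy1.le
  set sx := Real.sqrt x with hsx
  set sy := Real.sqrt y with hsy
  have hsx2 : sx ^ 2 = x := Real.sq_sqrt hx0
  have hsy2 : sy ^ 2 = y := Real.sq_sqrt hy0
  have hsxpos : c < sx := by
    have := (Real.lt_sqrt hc0).mpr hx1
    simpa [hsx] using this
  have hsypos : c < sy := by
    have := (Real.lt_sqrt hc0).mpr hy1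
    simpa [hsy] using this
  have hsxy : sx < sy := Real.sqrt_lt_sqrt hx0 hxy
  have hAx : 0 < 1 + x - 2 * sx * c := by
    nlinarith [sq_nonneg (sx - c)]
  have hAy : 0 < 1 + y - 2 * sy * c := by
    nlinarith [sq_nonneg (sy - c)]
  have hAxy : 1 + x - 2 * sx * c < 1 + y - 2 * sy * c := by
    nlinarith [mul_pos (sub_pos.mpr hsxy) (by nlinarith : 0 < sy + sx - 2 * c)]
  have hBx : 0 < (No + 1 - x) * (1 - x) ^ 2 := by
    exact mul_pos (by linarith) (pow_pos (by linarith) 2)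
  have hBy : 0 < (No + 1 - y) * (1 - y) ^ 2 := by
    exact mul_pos (by linarith) (pow_pos (by linarith) 2)
  have hBxy : (No + 1 - y) * (1 - y) ^ 2 < (No + 1 - x) * (1 - x) ^ 2 := by
    have h1 : (1 - y) ^ 2 < (1 - x) ^ 2 := by nlinarith
    calc (No + 1 - y) * (1 - y) ^ 2 < (No + 1 - y) * (1 - x) ^ 2 :=
          mul_lt_mul_of_pos_left h1 (by linarith)
      _ ≤ (No + 1 - x) * (1 - x) ^ 2 :=
          mul_le_mul_of_nonneg_right (by linarith) (sq_nonneg _)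
  have hNo2 : 0 < No ^ 2 := by positivity
  have hdx : 0 < 4 * (1 + x - 2 * sx * c) * No ^ 2 + (No + 1 - x) * (1 - x) ^ 2 :=
    add_pos (mul_pos (mul_pos (by norm_num) hAx) hNo2) hBx
  have hdy : 0 < 4 * (1 + y - 2 * sy * c) * No ^ 2 + (No + 1 - y) * (1 - y) ^ 2 :=
    add_pos (mul_pos (mul_pos (by norm_num) hAy) hNo2) hBy
  simp only
  rw [div_lt_div_iff₀ hdx hdy]
  have key : (1 + x - 2 * sx * c) * ((No + 1 - y) * (1 - y) ^ 2) <
      (1 + y - 2 * sy * c) * ((No + 1 - x) * (1 - x) ^ 2) :=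
    calc (1 + x - 2 * sx * c) * ((No + 1 - y) * (1 - y) ^ 2)
        < (1 + y - 2 * sy * c) * ((No + 1 - y) * (1 - y) ^ 2) :=
          mul_lt_mul_of_pos_right hAxy hBy
      _ < (1 + y - 2 * sy * c) * ((No + 1 - x) * (1 - x) ^ 2) :=
          mul_lt_mul_of_pos_left hBxy hAy
  have h4 : (0:ℝ) < 4 * No ^ 2 := by positivity
  nlinarith [mul_lt_mul_of_pos_left key h4]
end

section
/- Let N_o > 0, let M ≥ 3 be an integer, set ς = cos(π/M), μ = (1 − ς²)/N_o and, for α ∈ (0, ς²), set ρ = (1 − α)/N_o, d²(α) = 1 + α − 2√α·ς and P^c_{2,avg}(α) = 4·d²(α)·N_o² / (4·d²(α)·N_o² + (N_o + 1 − α)(1 − α)²). Then for every α ∈ (0, ς²): ρ ≥ μ and P^c_{2,avg}(α) ≤ 4ρ/(ρ³ + ρ² + 4μ); in particular P^c_{2,avg}(α) ≤ 4/μ², so that if μ ≫ 1 then P^c_{2,avg}(α) + 1/2 ≈ 1/2. -/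
set_option maxHeartbeats 800000 in
/-- for α ∈ (0, ς²) with ς = cos(π/M), μ = (1−ς²)/N_o and
ρ = (1−α)/N_o, one has ρ ≥ μ and
P^c_{2,avg}(α) ≤ 4ρ/(ρ³ + ρ² + 4μ); in particular P^c_{2,avg}(α) ≤ 4/μ². -/
theorem P2cavg_small (No : ℝ) (hNo : 0 < No) (M : ℕ) (hM : 3 ≤ M) :
    ∀ α : ℝ, 0 < α → α < (Real.cos (Real.pi / M)) ^ 2 →
      let ς := Real.cos (Real.pi / M)
      let μ := (1 - ς ^ 2) / No
      let ρ := (1 - α) / No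
      let d2 := 1 + α - 2 * Real.sqrt α * ς
      let P2c := 4 * d2 * No ^ 2 / (4 * d2 * No ^ 2 + (No + 1 - α) * (1 - α) ^ 2)
      μ ≤ ρ ∧ P2c ≤ 4 * ρ / (ρ ^ 3 + ρ ^ 2 + 4 * μ) ∧ P2c ≤ 4 / μ ^ 2 := by
  intro α hα0 hας ς μ ρ d2 P2c
  have hM3 : (3:ℝ) ≤ (M:ℝ) := by exact_mod_cast hM
  have hπM0 : 0 < Real.pi / M := div_pos Real.pi_pos (by linarith)
  have hπM2 : Real.pi / M < Real.pi / 2 :=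
    div_lt_div_of_pos_left Real.pi_pos two_pos (by linarith)
  have hς0 : 0 < ς := Real.cos_pos_of_mem_Ioo ⟨by linarith [Real.pi_pos], hπM2⟩
  have hς1 : ς < 1 := by
    have := Real.cos_lt_cos_of_nonneg_of_le_pi le_rfl
      (by linarith [Real.pi_pos] : Real.pi / M ≤ Real.pi) hπM0
    simpa [Real.cos_zero] using this
  have hςsq : ς ^ 2 < 1 := by nlinarith
  have hα1 : α < 1 := lt_trans hας hςsq
  have hμ0 : 0 < μ := div_pos (by nlinarith) hNo
  have hρ0 : 0 < ρ := div_pos (by linarith) hNo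
  have hμρ : μ ≤ ρ := by
    show (1 - ς ^ 2) / No ≤ (1 - α) / No
    exact div_le_div_of_nonneg_right (by linarith [hας.le]) hNo.le
  -- facts about sqrt α
  have hs0 : 0 ≤ Real.sqrt α := Real.sqrt_nonneg α
  have hs2 : Real.sqrt α ^ 2 = α := Real.sq_sqrt hα0.le
  have hsς : Real.sqrt α < ς := by
    have := Real.sqrt_lt_sqrt hα0.le hας
    rwa [Real.sqrt_sq hς0.le] at this
  -- bounds on d2
  have hd2le : d2 ≤ 1 - α := by
    show 1 + α - 2 * Real.sqrt α * ς ≤ 1 - α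
    nlinarith [mul_le_mul_of_nonneg_left hsς.le hs0]
  have hd2ge : 1 - ς ^ 2 ≤ d2 := by
    show 1 - ς ^ 2 ≤ 1 + α - 2 * Real.sqrt α * ς
    nlinarith [sq_nonneg (Real.sqrt α - ς)]
  have hd20 : 0 < d2 := lt_of_lt_of_le (by nlinarith) hd2ge
  set A := 4 * d2 * No ^ 2 with hA
  set B := (No + 1 - α) * (1 - α) ^ 2 with hB
  have hA0 : 0 < A := by
    rw [hA]; exact mul_pos (mul_pos (by norm_num) hd20) (pow_pos hNo 2)
  have hB0 : 0 < B := by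
    exact mul_pos (by linarith) (pow_pos (by linarith) 2)
  have hAB0 : 0 < A + B := by linarith
  have hP2c : P2c = A / (A + B) := rfl
  -- key identities
  have hρNo : ρ * No = 1 - α := by
    show (1 - α) / No * No = 1 - α
    field_simp
  have hμNo : μ * No = 1 - ς ^ 2 := by
    show (1 - ς ^ 2) / No * No = 1 - ς ^ 2
    field_simp
  have hBeq : B = No ^ 3 * (ρ ^ 3 + ρ ^ 2) := by
    have h1 : (No : ℝ) ≠ 0 := hNo.ne'
    show (No + 1 - α) * (1 - α) ^ 2 = No ^ 3 * (((1 - α) / No) ^ 3 + ((1 - α) / No) ^ 2)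
    field_simp
    ring
  have hAle : A ≤ 4 * ρ * No ^ 3 := by
    have h43 : 4 * ρ * No ^ 3 = 4 * (1 - α) * No ^ 2 := by
      linear_combination 4 * No ^ 2 * hρNo
    rw [h43, hA]
    nlinarith [mul_le_mul_of_nonneg_right hd2le (sq_nonneg No)]
  clear_value ς μ ρ d2 P2c A B
  have hden2 : 0 < ρ ^ 3 + ρ ^ 2 + 4 * μ := by positivity
  have h2 : P2c ≤ 4 * ρ / (ρ ^ 3 + ρ ^ 2 + 4 * μ) := by
    have h4ρB : 4 * ρ * B = 4 * ρ * No ^ 3 * (ρ ^ 3 + ρ ^ 2) := by rw [hBeq]; ring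
    rw [hP2c, div_le_div_iff₀ hAB0 hden2]
    linarith [mul_nonneg hA0.le (sub_nonneg.mpr hμρ),
      mul_nonneg (sub_nonneg.mpr hAle) (by positivity : (0:ℝ) ≤ ρ ^ 3 + ρ ^ 2),
      h4ρB]
  refine ⟨hμρ, h2, le_trans h2 ?_⟩
  rw [div_le_div_iff₀ hden2 (by positivity)]
  linarith [mul_nonneg hρ0.le (mul_nonneg (sub_nonneg.mpr hμρ) (by linarith : (0:ℝ) ≤ ρ + μ)),
    hμ0.le, hρ0.le, sq_nonneg ρ]
end

section
/- There exists a constant μ₀ ≥ 1 with the following property. For every integer M ≥ 3, every N_o > 0, every σ² > 0 and every α ∈ (0,1): if sin²(π/M) = μ·N_o for some μ ≥ μ₀, then P_{1,avg} < P₁₁·P_{3,avg} + P₁₀·(1/2), where N_{B0} = N_o, N_{B1} = N_o + 1 − α, d² = 1 + α − 2√α·cos(π/M), ℓ² = 4α·sin²(π/M), P₁₁ = (N_o/(N_o + σ²(1−α)))^{N_o/(σ²(1−α))}, P₁₀ = 1 − P₁₁, P₀₀ = 1 − (N_o/(N_o + σ²(1−α)))^{(N_o + σ²(1−α))/(σ²(1−α))},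 P_{1,avg} = (N_{B0}P₁₁/(N_{B1}P₀₀))^{N_{B1}/(N_{B1}−N_{B0})}·(N_{B0}−N_{B1})²/((N_{B0}−N_{B1})² + d²N_{B1}) and P_{3,avg} = 2N_{B1}/(4N_{B1} + ℓ²). -/
set_option maxHeartbeats 1000000


lemma rpow_sum_le (N u : ℝ) (hN : 0 < N) (hu : 0 < u) :
    (N/(N+u))^(N/u) + (N/(N+u))^((N+u)/u) ≤ 1 := by
  have hNu : 0 < N + u := by linarith
  set y := N/(N+u) with hy_def
  have hy0 : 0 < y := div_pos hN hNu
  have hy1 : y < 1 := (div_lt_one hNu).mpr (by linarith)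
  have h2 : y^((N+u)/u) = y^(N/u) * y := by
    have hsplit : (N+u)/u = N/u + 1 := by field_simp
    rw [hsplit, Real.rpow_add hy0, Real.rpow_one]
  have hlog : Real.log y ≤ y - 1 := Real.log_le_sub_one_of_pos hy0
  have hexp : y^(N/u) ≤ Real.exp (-y) := by
    rw [Real.rpow_def_of_pos hy0]
    apply Real.exp_le_exp.mpr
    rw [mul_comm]
    have h3 : (N/u) * (y - 1) = -y := by
      rw [hy_def]; field_simp; ring
    calc N/u * Real.log y ≤ N/u * (y-1) :=
          mul_le_mul_of_nonneg_left hlog (by positivity)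
      _ = -y := h3
  have hey : 1 + y ≤ Real.exp y := by linarith [Real.add_one_le_exp y]
  have hkey : y^(N/u) * (1 + y) ≤ 1 := by
    calc y^(N/u)*(1+y) ≤ Real.exp (-y) * Real.exp y :=
          mul_le_mul hexp hey (by positivity) (Real.exp_nonneg _)
      _ = 1 := by rw [← Real.exp_add]; simp
  nlinarith [hkey, h2, Real.rpow_pos_of_pos hy0 (N/u)]

lemma poly_key (N s a K : ℝ) (hN : 0 < N) (hs : 0 < s) (hs1 : s < 1)
    (hK : 0 < K) (hK1 : K ≤ 1) (h100 : 100*N ≤ K) (ha : a = 1 - s) :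
    N*s^2*(2*(N+s)+2*a*K) ≤ (N+s)^2*(s^2+a*K*(N+s)) := by
  subst ha
  have hak : 0 ≤ (1-s)*K := by nlinarith
  rcases le_or_gt N s with h | h
  · have h1 : 2*(N*s^2*(N+s)) ≤ (N+s)^2*s^2 := by
      nlinarith [mul_nonneg (mul_nonneg (sq_nonneg s) (by linarith : (0:ℝ) ≤ N+s)) (by linarith : (0:ℝ) ≤ s-N)]
    have h2 : 2*N*s^2*((1-s)*K) ≤ (1-s)*K*(N+s)^3 := by
      nlinarith [mul_nonneg hak (by positivity : (0:ℝ) ≤ N^3+3*N^2*s+N*s^2+s^3)]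
    nlinarith [h1, h2]
  · have hN100 : N ≤ 1/100 := by linarith
    have hs100 : s ≤ 1/100 := by linarith
    have ha99 : (99:ℝ)/100 ≤ 1 - s := by linarith
    have hfac : 2*(N+s) ≤ (4/99)*((1-s)*K) := by
      nlinarith [mul_le_mul_of_nonneg_right ha99 hK.le]
    have h1 : 2*(N*s^2*(N+s)) ≤ (4/99)*((1-s)*K)*(N*s^2) := by
      nlinarith [mul_le_mul_of_nonneg_right hfac (mul_nonneg hN.le (sq_nonneg s))]
    have h2 : (2 + 4/99)*((1-s)*K)*(N*s^2) ≤ (1-s)*K*(N+s)^3 := by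
      nlinarith [mul_nonneg hak (by positivity : (0:ℝ) ≤ N^3+3*N^2*s+s^3),
        mul_nonneg hak (mul_nonneg hN.le (sq_nonneg s))]
    nlinarith [h1, h2]


lemma main_ineq (No u α K c : ℝ) (hNo : 0 < No) (hu : 0 < u)
    (hα : 0 < α) (hα1 : α < 1) (hK : 0 < K) (hK1 : K ≤ 1)
    (h100 : 100 * No ≤ K) (hc : c ^ 2 + K = 1) :
    (No * (No/(No+u))^(No/u) / ((No + (1-α)) * (1 - (No/(No+u))^((No+u)/u)))) ^ ((No + (1-α))/(1-α)) *
      ((1-α)^2 / ((1-α)^2 + (1 + α - 2*Real.sqrt α * c) * (No + (1-α)))) <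
    (No/(No+u))^(No/u) * (2*(No+(1-α)) / (4*(No+(1-α)) + 4*α*K)) +
      (1 - (No/(No+u))^(No/u)) * (1/2) := by
  have hNu : 0 < No + u := by linarith
  set y := No/(No+u) with hy_def
  have hy0 : 0 < y := div_pos hNo hNu
  have hy1 : y < 1 := (div_lt_one hNu).mpr (by linarith)
  have hP11pos : 0 < y^(No/u) := Real.rpow_pos_of_pos hy0 _
  have hP11lt1 : y^(No/u) < 1 := Real.rpow_lt_one hy0.le hy1 (by positivity)
  have hsum : y^(No/u) + y^((No+u)/u) ≤ 1 := rpow_sum_le No u hNo hu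
  have hq : 0 < y^((No+u)/u) := Real.rpow_pos_of_pos hy0 _
  have hP00pos : 0 < 1 - y^((No+u)/u) := by linarith
  have hP11leP00 : y^(No/u) ≤ 1 - y^((No+u)/u) := by linarith
  set s := 1 - α with hs_def
  have hs : 0 < s := by rw [hs_def]; linarith
  have hs1 : s < 1 := by rw [hs_def]; linarith
  have hS : 0 < No + s := by linarith
  set P := y^(No/u) with hP_def
  set A := No * P / ((No + s) * (1 - y^((No+u)/u))) with hA_def
  have hApos : 0 < A := div_pos (mul_pos hNo hP11pos) (mul_pos hS hP00pos)
  have hAle : A ≤ No/(No+s) := by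
    rw [hA_def, div_le_div_iff₀ (mul_pos hS hP00pos) hS]
    nlinarith [mul_le_mul_of_nonneg_left hP11leP00 (mul_pos hNo hS).le]
  have hAlt1 : A < 1 := lt_of_le_of_lt hAle ((div_lt_one hS).mpr (by linarith))
  have hE : (1:ℝ) ≤ (No+s)/s := by rw [le_div_iff₀ hs]; linarith
  have hpow : A ^ ((No+s)/s) ≤ No/(No+s) := by
    calc A ^ ((No+s)/s) ≤ A ^ (1:ℝ) :=
          Real.rpow_le_rpow_of_exponent_ge hApos hAlt1.le hE
      _ = A := Real.rpow_one A
      _ ≤ No/(No+s) := hAle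
  -- d2 bound
  have hsq : Real.sqrt α ^ 2 = α := Real.sq_sqrt hα.le
  have hq0 : 0 ≤ Real.sqrt α := Real.sqrt_nonneg α
  have hqle1 : Real.sqrt α ≤ 1 := by nlinarith [sq_nonneg (Real.sqrt α - 1)]
  have hαsqrt : α ≤ Real.sqrt α := by nlinarith
  have h2c : 0 ≤ 2 - 2*c - K := by nlinarith [sq_nonneg (1-c)]
  have hd2 : α*K ≤ 1 + α - 2*Real.sqrt α * c := by
    nlinarith [mul_nonneg hq0 h2c, mul_nonneg (by linarith : (0:ℝ) ≤ Real.sqrt α - α) hK.le,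
      sq_nonneg (1 - Real.sqrt α)]
  have hαK : 0 < α*K := mul_pos hα hK
  have hd2pos : 0 < 1 + α - 2*Real.sqrt α * c := lt_of_lt_of_le hαK hd2
  have hden1 : 0 < s^2 + (1 + α - 2*Real.sqrt α * c)*(No+s) := by positivity
  have hden2 : 0 < s^2 + α*K*(No+s) := by positivity
  have hB : s^2 / (s^2 + (1 + α - 2*Real.sqrt α * c)*(No+s)) ≤ s^2 / (s^2 + α*K*(No+s)) := by
    rw [div_le_div_iff₀ hden1 hden2]
    nlinarith [mul_le_mul_of_nonneg_left (mul_le_mul_of_nonneg_right hd2 hS.le) (sq_nonneg s)]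
  have hL1 : A ^ ((No+s)/s) * (s^2 / (s^2 + (1 + α - 2*Real.sqrt α * c)*(No+s)))
      ≤ (No/(No+s)) * (s^2 / (s^2 + α*K*(No+s))) := by
    apply mul_le_mul hpow hB (by positivity) (by positivity)
  have hα_eq : α = 1 - s := by rw [hs_def]; ring
  have hmid : (No/(No+s)) * (s^2 / (s^2 + α*K*(No+s))) ≤ (No+s)/(2*(No+s)+2*α*K) := by
    rw [div_mul_div_comm, div_le_div_iff₀ (mul_pos hS hden2) (by nlinarith)]
    nlinarith [poly_key No s α K hNo hs hs1 hK hK1 h100 hα_eq]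
  have hQeq : 2*(No+s)/(4*(No+s)+4*α*K) = (No+s)/(2*(No+s)+2*α*K) := by
    rw [div_eq_div_iff (by nlinarith) (by nlinarith)]; ring
  have hQhalf : (No+s)/(2*(No+s)+2*α*K) < 1/2 := by
    rw [div_lt_div_iff₀ (by nlinarith) two_pos]; nlinarith
  have hfinal : (No+s)/(2*(No+s)+2*α*K) < P * ((No+s)/(2*(No+s)+2*α*K)) + (1 - P) * (1/2) := by
    have h5 : (1-P)*((No+s)/(2*(No+s)+2*α*K)) < (1-P)*(1/2) :=
      mul_lt_mul_of_pos_left hQhalf (by linarith)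
    linarith [h5]
  calc A ^ ((No+s)/s) * (s^2 / (s^2 + (1 + α - 2*Real.sqrt α * c)*(No+s)))
      ≤ (No/(No+s)) * (s^2 / (s^2 + α*K*(No+s))) := hL1
    _ ≤ (No+s)/(2*(No+s)+2*α*K) := hmid
    _ < P * ((No+s)/(2*(No+s)+2*α*K)) + (1 - P) * (1/2) := hfinal
    _ = P * (2*(No+s)/(4*(No+s)+4*α*K)) + (1 - P) * (1/2) := by rw [hQeq]

/-- Theorem 2 of the paper: there exists μ₀ ≥ 1 such that
whenever sin²(π/M) = μN_o with μ ≥ μ₀ (the high-SNR regime), the averaged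
error term P_{1,avg} is dominated: P_{1,avg} < P₁₁·P_{3,avg} + P₁₀·(1/2). -/

theorem P1avg_not_dominant :
    ∃ μ₀ : ℝ, 1 ≤ μ₀ ∧
      ∀ (M : ℕ), 3 ≤ M → ∀ No σ2 α μ : ℝ,
        0 < No → 0 < σ2 → 0 < α → α < 1 → μ₀ ≤ μ →
        Real.sin (Real.pi / M) ^ 2 = μ * No →
        let NB0 := No
        let NB1 := No + 1 - α
        let d2 := 1 + α - 2 * Real.sqrt α * Real.cos (Real.pi / M)
        let l2 := 4 * α * Real.sin (Real.pi / M) ^ 2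
        let P11 := (No / (No + σ2 * (1 - α))) ^ (No / (σ2 * (1 - α)))
        let P10 := 1 - P11
        let P00 := 1 - (No / (No + σ2 * (1 - α))) ^ ((No + σ2 * (1 - α)) / (σ2 * (1 - α)))
        (NB0 * P11 / (NB1 * P00)) ^ (NB1 / (NB1 - NB0)) *
            ((NB0 - NB1) ^ 2 / ((NB0 - NB1) ^ 2 + d2 * NB1))
          < P11 * (2 * NB1 / (4 * NB1 + l2)) + P10 * (1 / 2) := by
  refine ⟨100, by norm_num, ?_⟩
  intro M hM No σ2 α μ hNo hσ2 hα hα1 hμ hsin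
  intro NB0 NB1 d2 l2 P11 P10 P00
  have hMpos : (0:ℝ) < (M:ℝ) := by positivity
  have hM1 : (1:ℝ) < (M:ℝ) := by exact_mod_cast lt_of_lt_of_le (by norm_num) hM
  have hθpos : 0 < Real.pi / M := div_pos Real.pi_pos hMpos
  have hθlt : Real.pi / M < Real.pi := by
    rw [div_lt_iff₀ hMpos]; nlinarith [Real.pi_pos]
  have hsinpos : 0 < Real.sin (Real.pi / M) := Real.sin_pos_of_pos_of_lt_pi hθpos hθlt
  have hK : 0 < Real.sin (Real.pi / M) ^ 2 := by positivity
  have hK1 : Real.sin (Real.pi / M) ^ 2 ≤ 1 := Real.sin_sq_le_one _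
  have h100 : 100 * No ≤ Real.sin (Real.pi / M) ^ 2 := by
    rw [hsin]; nlinarith
  have hc : Real.cos (Real.pi / M) ^ 2 + Real.sin (Real.pi / M) ^ 2 = 1 :=
    Real.cos_sq_add_sin_sq _
  have hu : 0 < σ2 * (1 - α) := by nlinarith
  have key := main_ineq No (σ2 * (1 - α)) α (Real.sin (Real.pi / M) ^ 2)
    (Real.cos (Real.pi / M)) hNo hu hα hα1 hK hK1 h100 hc
  show (No * ((No / (No + σ2 * (1 - α))) ^ (No / (σ2 * (1 - α)))) /
        ((No + 1 - α) * (1 - (No / (No + σ2 * (1 - α))) ^ ((No + σ2 * (1 - α)) / (σ2 * (1 - α)))))) ^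
          ((No + 1 - α) / (No + 1 - α - No)) *
        ((No - (No + 1 - α)) ^ 2 /
          ((No - (No + 1 - α)) ^ 2 +
            (1 + α - 2 * Real.sqrt α * Real.cos (Real.pi / M)) * (No + 1 - α))) <
      ((No / (No + σ2 * (1 - α))) ^ (No / (σ2 * (1 - α)))) *
          (2 * (No + 1 - α) / (4 * (No + 1 - α) + 4 * α * Real.sin (Real.pi / M) ^ 2)) +
        (1 - (No / (No + σ2 * (1 - α))) ^ (No / (σ2 * (1 - α)))) * (1 / 2)
  rw [show No + 1 - α - No = 1 - α from by ring,
      show (No - (No + 1 - α)) ^ 2 = (1 - α) ^ 2 from by ring,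
      show No + 1 - α = No + (1 - α) from by ring]
  exact key
end

section
/- Fix an integer M ≥ 2 and σ² ≥ 1. For N_o > 0 and α ∈ (0,1) define P₁₁(α) = (N_o/(N_o + σ²(1−α)))^{N_o/(σ²(1−α))}, P₁₀(α) = 1 − P₁₁(α), P_{3,avg}(α) = 2(N_o + 1 − α)/(4(N_o + 1 − α) + 4α·sin²(π/M)), d²(α) = 1 + α − 2√α·cos(π/M), and P^c_{2,avg}(α) = 4d²(α)N_o²/(4d²(α)N_o² + (N_o + 1 − α)(1 − α)²). Then there exists N* > 0 such that for every N_o ∈ (0, N*), the two functions f₁(α) = P₁₁(α)·P_{3,avg}(α) and f₂(α) = P₁₀(α)·(P^c_{2,avg}(α) + 1/2) intersect at exactly one point α* ∈ (0,1); that is, the equation f₁(α) = f₂(α) has a unique solution in (0,1). -/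
open Real Set

namespace UI17


/-- x/(1+x) < log(1+x) for x > 0 -/
lemma log_one_add_gt {x : ℝ} (hx : 0 < x) : x / (1 + x) < Real.log (1 + x) := by
  have h1 : (0:ℝ) < 1 + x := by linarith
  have h2 : (1 + x)⁻¹ ≠ 1 := by
    intro h
    have : (1:ℝ) + x = 1 := by
      field_simp at h; linarith
    linarith
  have h3 := Real.log_lt_sub_one_of_pos (by positivity : (0:ℝ) < (1+x)⁻¹) h2
  rw [Real.log_inv] at h3
  have h4 : (1+x)⁻¹ - 1 = -(x/(1+x)) := by field_simp; ring
  rw [h4] at h3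
  linarith

/-- L(x) = log(1+x)/x is strictly decreasing on (0,∞). -/
lemma Lanti : StrictAntiOn (fun x : ℝ => Real.log (1 + x) / x) (Ioi 0) := by
  apply strictAntiOn_of_deriv_neg (convex_Ioi 0)
  · apply ContinuousOn.div
    · apply ContinuousOn.log (by fun_prop)
      intro x hx
      have : (0:ℝ) < x := hx
      positivity
    · fun_prop
    · intro x hx; exact ne_of_gt hx
  · intro x hx
    rw [interior_Ioi] at hx
    have hx0 : (0:ℝ) < x := hx
    have h1x : (0:ℝ) < 1 + x := by linarith
    have hl : HasDerivAt (fun y : ℝ => Real.log (1 + y)) ((1+x)⁻¹ * 1) x := by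
      exact (Real.hasDerivAt_log (ne_of_gt h1x)).comp x ((hasDerivAt_id x).const_add 1)
    have hd : HasDerivAt (fun y : ℝ => Real.log (1 + y) / y)
        (((1+x)⁻¹ * 1 * x - Real.log (1+x) * 1) / x ^ 2) x :=
      hl.div (hasDerivAt_id x) (ne_of_gt hx0)
    rw [hd.deriv]
    apply div_neg_of_neg_of_pos
    · have := log_one_add_gt hx0
      have : x / (1+x) < Real.log (1+x) := this
      have hxx : (1+x)⁻¹ * 1 * x = x / (1+x) := by field_simp
      rw [hxx]; linarith
    · positivity

lemma log_one_add_le_two_sqrt {x : ℝ} (hx : 0 ≤ x) : Real.log (1 + x) ≤ 2 * Real.sqrt x := by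
  have hs := Real.sqrt_nonneg x
  have hsq := Real.sq_sqrt hx
  have h1 : Real.sqrt (1 + x) ≤ 1 + Real.sqrt x := by
    have h2 : (1 + x) ≤ (1 + Real.sqrt x) ^ 2 := by nlinarith
    calc Real.sqrt (1 + x) ≤ Real.sqrt ((1 + Real.sqrt x) ^ 2) := Real.sqrt_le_sqrt h2
    _ = 1 + Real.sqrt x := Real.sqrt_sq (by linarith)
  have h3 : Real.log (1 + x) = 2 * Real.log (Real.sqrt (1 + x)) := by
    rw [Real.log_sqrt (by linarith)]; ring
  have h4 : Real.log (Real.sqrt (1 + x)) ≤ Real.log (1 + Real.sqrt x) := by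
    apply Real.log_le_log (by positivity) h1
  have h5 : Real.log (1 + Real.sqrt x) ≤ Real.sqrt x := by
    have := Real.log_le_sub_one_of_pos (by positivity : (0:ℝ) < 1 + Real.sqrt x)
    linarith
  linarith



noncomputable def Af (σ2 No α : ℝ) : ℝ :=
  (No / (No + σ2 * (1 - α))) ^ (No / (σ2 * (1 - α)))

noncomputable def P3f (s No α : ℝ) : ℝ :=
  2 * (No + 1 - α) / (4 * (No + 1 - α) + 4 * α * s ^ 2)

noncomputable def d2f (c α : ℝ) : ℝ :=
  1 + α - 2 * Real.sqrt α * c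

noncomputable def P2f (c No α : ℝ) : ℝ :=
  4 * d2f c α * No ^ 2 / (4 * d2f c α * No ^ 2 + (No + 1 - α) * (1 - α) ^ 2)

noncomputable def gf (σ2 No s c α : ℝ) : ℝ :=
  Af σ2 No α * P3f s No α - (1 - Af σ2 No α) * (P2f c No α + 1 / 2)

lemma Af_eq {σ2 No α : ℝ} (hσ : 0 < σ2) (hNo : 0 < No) (hα : α < 1) :
    Af σ2 No α
      = Real.exp (-(Real.log (1 + σ2 * (1 - α) / No) / (σ2 * (1 - α) / No))) := by
  have ht : 0 < σ2 * (1 - α) := by nlinarith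
  set x : ℝ := σ2 * (1 - α) / No with hxdef
  have hx : 0 < x := by positivity
  have h1 : No + σ2 * (1 - α) = No * (1 + x) := by
    rw [hxdef, mul_add, mul_one, mul_div_assoc', mul_div_right_comm, div_self hNo.ne', one_mul]
  have hbase : No / (No + σ2 * (1 - α)) = (1 + x)⁻¹ := by
    rw [h1]
    rw [eq_comm, inv_eq_iff_eq_inv, eq_comm, inv_eq_one_div]
    field_simp
  have hexp : No / (σ2 * (1 - α)) = 1 / x := by
    rw [hxdef, one_div_div]
  rw [Af, hbase, hexp, Real.rpow_def_of_pos (by positivity)]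
  rw [Real.log_inv]
  congr 1
  field_simp


lemma Af_pos {σ2 No α : ℝ} (hσ : 0 < σ2) (hNo : 0 < No) (hα : α < 1) :
    0 < Af σ2 No α := by
  rw [Af_eq hσ hNo hα]; exact Real.exp_pos _

lemma L_pos {x : ℝ} (hx : 0 < x) : 0 < Real.log (1 + x) / x := by
  have : 0 < Real.log (1 + x) := Real.log_pos (by linarith)
  positivity

lemma Af_lt_one {σ2 No α : ℝ} (hσ : 0 < σ2) (hNo : 0 < No) (hα : α < 1) :
    Af σ2 No α < 1 := by
  rw [Af_eq hσ hNo hα, Real.exp_lt_one_iff]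
  have hx : 0 < σ2 * (1 - α) / No := by
    have : 0 < σ2 * (1 - α) := by nlinarith
    positivity
  have := L_pos hx
  linarith

lemma Af_anti {σ2 No a b : ℝ} (hσ : 0 < σ2) (hNo : 0 < No) (hab : a < b) (hb : b < 1) :
    Af σ2 No b < Af σ2 No a := by
  have ha : a < 1 := by linarith
  rw [Af_eq hσ hNo hb, Af_eq hσ hNo ha]
  apply Real.exp_lt_exp.mpr
  have hxb : 0 < σ2 * (1 - b) / No := by
    have : 0 < σ2 * (1 - b) := by nlinarith
    positivity
  have hxa : 0 < σ2 * (1 - a) / No := by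
    have : 0 < σ2 * (1 - a) := by nlinarith
    positivity
  have hlt : σ2 * (1 - b) / No < σ2 * (1 - a) / No := by
    have h1 : σ2 * (1 - b) < σ2 * (1 - a) := by nlinarith
    exact div_lt_div_of_pos_right h1 hNo
  have h2 := Lanti (mem_Ioi.mpr hxb) (mem_Ioi.mpr hxa) hlt
  dsimp only at h2
  linarith

lemma P3_pos {s No α : ℝ} (hNo : 0 < No) (hα0 : 0 ≤ α) (hα1 : α < 1) :
    0 < P3f s No α := by
  unfold P3f
  have h1 : 0 < No + 1 - α := by linarith
  have h2 : 0 ≤ 4 * α * s ^ 2 := by positivity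
  positivity

lemma P3_anti {s No a b : ℝ} (hNo : 0 < No)
    (hs : 0 < s) (ha0 : 0 ≤ a) (hab : a < b) (hb : b < 1) :
    P3f s No b < P3f s No a := by
  unfold P3f
  have hXa : 0 < No + 1 - a := by linarith
  have hXb : 0 < No + 1 - b := by linarith
  have hDa : 0 < 4 * (No + 1 - a) + 4 * a * s ^ 2 := by positivity
  have hb0 : 0 ≤ b := le_trans ha0 hab.le
  have hDb : 0 < 4 * (No + 1 - b) + 4 * b * s ^ 2 := by
    have := mul_nonneg (mul_nonneg (by norm_num : (0:ℝ) ≤ 4) hb0) (sq_nonneg s)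
    linarith
  rw [div_lt_div_iff₀ hDb hDa]
  have key : (No + 1 - b) * a < (No + 1 - a) * b := by nlinarith
  have key2 : s ^ 2 * ((No + 1 - b) * a) < s ^ 2 * ((No + 1 - a) * b) :=
    mul_lt_mul_of_pos_left key (by positivity)
  nlinarith [key2]

lemma d2_eq {c α : ℝ} (hα : 0 ≤ α) :
    d2f c α = (Real.sqrt α - c) ^ 2 + (1 - c ^ 2) := by
  unfold d2f
  have h1 := Real.sq_sqrt hα
  nlinarith [Real.sqrt_nonneg α]

lemma d2_pos {c α : ℝ} (hα : 0 ≤ α) (hc2 : c ^ 2 < 1) :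
    0 < d2f c α := by
  rw [d2_eq hα]
  nlinarith [sq_nonneg (Real.sqrt α - c)]

lemma d2_mono {c a b : ℝ} (hc : 0 ≤ c)
    (ha : c ^ 2 ≤ a) (hab : a < b) :
    d2f c a < d2f c b := by
  unfold d2f
  have ha0 : 0 ≤ a := le_trans (by positivity) ha
  have hsa : c ≤ Real.sqrt a := by
    rw [show c = Real.sqrt (c ^ 2) from (Real.sqrt_sq hc).symm]
    exact Real.sqrt_le_sqrt ha
  have hsab : Real.sqrt a < Real.sqrt b := Real.sqrt_lt_sqrt ha0 hab
  have hsqa := Real.sq_sqrt ha0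
  have hsqb := Real.sq_sqrt (le_trans ha0 hab.le)
  nlinarith

lemma P2_nonneg {c No α : ℝ} (hNo : 0 < No) (hα0 : 0 ≤ α) (hα1 : α < 1)
    (hc2 : c ^ 2 < 1) : 0 ≤ P2f c No α := by
  unfold P2f
  have h1 : 0 < d2f c α := d2_pos hα0 hc2
  have h2 : 0 < No + 1 - α := by linarith
  positivity

lemma P2_le_one {c No α : ℝ} (hNo : 0 < No) (hα0 : 0 ≤ α) (hα1 : α < 1)
    (hc2 : c ^ 2 < 1) : P2f c No α ≤ 1 := by
  unfold P2f
  have h1 : 0 < d2f c α := d2_pos hα0 hc2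
  have h2 : 0 < No + 1 - α := by linarith
  apply div_le_one_of_le₀
  · nlinarith [mul_nonneg h2.le (sq_nonneg (1 - α))]
  · positivity

lemma P2_mono {c No a b : ℝ} (hNo : 0 < No)
    (hc2 : c ^ 2 < 1) (hc : 0 ≤ c)
    (ha : c ^ 2 ≤ a) (hab : a < b) (hb : b < 1) :
    P2f c No a < P2f c No b := by
  have ha0 : 0 ≤ a := le_trans (by positivity) ha
  have hda : 0 < d2f c a := d2_pos ha0 hc2
  have hdb : 0 < d2f c b := d2_pos (le_trans ha0 hab.le) hc2
  have hdlt : d2f c a < d2f c b := d2_mono hc ha hab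
  have hNa : 0 < (No + 1 - a) * (1 - a) ^ 2 := by
    have h1 : 0 < No + 1 - a := by linarith
    have h2 : 0 < (1 - a) ^ 2 := by nlinarith
    positivity
  have hNb : 0 < (No + 1 - b) * (1 - b) ^ 2 := by
    have h1 : 0 < No + 1 - b := by linarith
    have h2 : 0 < (1 - b) ^ 2 := by nlinarith
    positivity
  have hNlt : (No + 1 - b) * (1 - b) ^ 2 < (No + 1 - a) * (1 - a) ^ 2 := by
    have e1 : (1 - b) ^ 2 < (1 - a) ^ 2 := by nlinarith
    calc (No + 1 - b) * (1 - b) ^ 2 < (No + 1 - b) * (1 - a) ^ 2 := by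
          apply mul_lt_mul_of_pos_left e1 (by linarith)
    _ ≤ (No + 1 - a) * (1 - a) ^ 2 := by nlinarith [sq_nonneg (1 - a)]
  unfold P2f
  rw [div_lt_div_iff₀ (by positivity) (by positivity)]
  have key : d2f c a * ((No + 1 - b) * (1 - b) ^ 2) < d2f c b * ((No + 1 - a) * (1 - a) ^ 2) := by
    calc d2f c a * ((No + 1 - b) * (1 - b) ^ 2) < d2f c b * ((No + 1 - b) * (1 - b) ^ 2) := by
          exact mul_lt_mul_of_pos_right hdlt hNb
    _ ≤ d2f c b * ((No + 1 - a) * (1 - a) ^ 2) := by nlinarith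
  have key2 : 4 * No ^ 2 * (d2f c a * ((No + 1 - b) * (1 - b) ^ 2)) <
      4 * No ^ 2 * (d2f c b * ((No + 1 - a) * (1 - a) ^ 2)) :=
    mul_lt_mul_of_pos_left key (by positivity)
  nlinarith [key2]

lemma gf_anti {σ2 No s c a b : ℝ} (hσ : 0 < σ2) (hNo : 0 < No)
    (hs : 0 < s) (hc2 : c ^ 2 < 1) (hc : 0 ≤ c)
    (ha : c ^ 2 ≤ a) (ha0 : 0 < a) (hab : a < b) (hb : b < 1) :
    gf σ2 No s c b < gf σ2 No s c a := by
  have ha1 : a < 1 := lt_trans hab hb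
  have hb0 : 0 < b := lt_trans ha0 hab
  have f1lt : Af σ2 No b * P3f s No b < Af σ2 No a * P3f s No a :=
    mul_lt_mul'' (Af_anti hσ hNo hab hb) (P3_anti hNo hs ha0.le hab hb)
      (Af_pos hσ hNo hb).le (P3_pos hNo hb0.le hb).le
  have f2lt : (1 - Af σ2 No a) * (P2f c No a + 1 / 2)
      < (1 - Af σ2 No b) * (P2f c No b + 1 / 2) := by
    apply mul_lt_mul''
    · have := Af_anti hσ hNo hab hb; linarith
    · have := P2_mono hNo hc2 hc ha hab hb; linarith
    · have := Af_lt_one hσ hNo ha1; linarith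
    · have := P2_nonneg hNo ha0.le ha1 hc2; linarith
  unfold gf
  linarith

set_option maxHeartbeats 2000000 in
lemma gf_left {σ2 No s c α : ℝ} (hσ : 1 ≤ σ2) (hNo : 0 < No)
    (hs : 0 < s) (hs1 : s ≤ 1) (hcs : s ^ 2 = 1 - c ^ 2)
    (hNs : No < s ^ 8 / 20000)
    (hα0 : 0 < α) (hα1 : α ≤ (1 + c ^ 2) / 2) :
    0 < gf σ2 No s c α := by
  have hc2 : c ^ 2 < 1 := by nlinarith
  have hs2 : s ^ 2 ≤ 1 := pow_le_one₀ hs.le hs1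
  have hs2p : 0 < s ^ 2 := by positivity
  have h1α : s ^ 2 / 2 ≤ 1 - α := by linarith
  have hα1' : α < 1 := by linarith
  have hσ0 : 0 < σ2 := by linarith
  set x : ℝ := σ2 * (1 - α) / No with hxdef
  clear_value x
  have htpos : 0 < σ2 * (1 - α) := mul_pos hσ0 (by linarith)
  have hx : 0 < x := by rw [hxdef]; positivity
  have hNo1 : No < 1 := by
    have h8 : s ^ 8 ≤ 1 := pow_le_one₀ hs.le hs1
    linarith
  have hxge : s ^ 2 ≤ 2 * No * x := by
    rw [hxdef, mul_div_assoc', le_div_iff₀ hNo]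
    have e1 : 2 * No * (s ^ 2 / 2) ≤ 2 * No * (1 - α) :=
      mul_le_mul_of_nonneg_left h1α (by positivity)
    have e2 : 1 * (2 * No * (1 - α)) ≤ σ2 * (2 * No * (1 - α)) :=
      mul_le_mul_of_nonneg_right hσ (by nlinarith)
    nlinarith [e1, e2]
  have hT : Real.sqrt (2 * No) < s ^ 4 / 100 := by
    have h1 : Real.sqrt (2 * No) < Real.sqrt (s ^ 8 / 10000) := by
      apply Real.sqrt_lt_sqrt (by positivity)
      linarith
    have h2 : Real.sqrt (s ^ 8 / 10000) = s ^ 4 / 100 := by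
      rw [show s ^ 8 / 10000 = (s ^ 4 / 100) ^ 2 by ring]
      exact Real.sqrt_sq (by positivity)
    linarith
  obtain ⟨r, hr⟩ : ∃ r, Real.sqrt x = r := ⟨_, rfl⟩
  have hrx : r * r = x := by rw [← hr]; exact Real.mul_self_sqrt hx.le
  have hrpos : 0 < r := by rw [← hr]; exact Real.sqrt_pos.mpr hx
  obtain ⟨w, hw⟩ : ∃ w, Real.sqrt (2 * No) = w := ⟨_, rfl⟩
  have hw0 : 0 ≤ w := by rw [← hw]; exact Real.sqrt_nonneg _
  have hTw : w < s ^ 4 / 100 := by rw [← hw]; exact hT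
  have hsx : s ≤ w * r := by
    rw [← hw, ← hr, ← Real.sqrt_mul (by positivity) x]
    rw [show s = Real.sqrt (s ^ 2) from (Real.sqrt_sq hs.le).symm]
    exact Real.sqrt_le_sqrt hxge
  have hL2 : Real.log (1 + x) / x ≤ 2 * w / s := by
    have h1 : Real.log (1 + x) ≤ 2 * r := by
      have := log_one_add_le_two_sqrt hx.le
      rw [hr] at this; exact this
    have h2 : Real.log (1 + x) / x ≤ 2 * r / x := by gcongr
    have h4 : 2 * r / x ≤ 2 * w / s := by
      rw [div_le_div_iff₀ hx hs]
      have e1 : (2 * r) * s ≤ (2 * r) * (w * r) :=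
        mul_le_mul_of_nonneg_left hsx (by positivity)
      nlinarith [e1, hrx]
    linarith
  have hLT : Real.log (1 + x) / x ≤ 2 * s ^ 3 / 100 := by
    have h5 : 2 * w / s ≤ 2 * s ^ 3 / 100 := by
      rw [div_le_div_iff₀ hs (by norm_num)]
      nlinarith [hTw, hs, hs1]
    linarith
  have hs3 : s ^ 3 ≤ 1 := pow_le_one₀ hs.le hs1
  have hs3p : 0 < s ^ 3 := by positivity
  have hAeq' := Af_eq (σ2 := σ2) (No := No) (α := α) hσ0 hNo hα1'
  rw [← hxdef] at hAeq'
  have hAub : 1 - Af σ2 No α ≤ Real.log (1 + x) / x := by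
    rw [hAeq']
    have := Real.add_one_le_exp (-(Real.log (1 + x) / x))
    linarith
  have hAlb : (49 : ℝ) / 50 ≤ Af σ2 No α := by linarith
  have hA1 : Af σ2 No α ≤ 1 := (Af_lt_one hσ0 hNo hα1').le
  have hX : s ^ 2 / 2 ≤ No + 1 - α := by linarith
  have hXpos : 0 < No + 1 - α := by linarith
  have hαs2 : α * s ^ 2 ≤ 1 := by
    have : α * s ^ 2 ≤ 1 * 1 := by
      apply mul_le_mul (by linarith) hs2 (by positivity) (by norm_num)
    linarith
  have hαs2n : 0 ≤ α * s ^ 2 := mul_nonneg hα0.le (by positivity)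
  have hD : 4 * (No + 1 - α) + 4 * α * s ^ 2 ≤ 12 := by nlinarith [hαs2]
  have hDpos : 0 < 4 * (No + 1 - α) + 4 * α * s ^ 2 := by nlinarith [hαs2n]
  have hP3 : s ^ 2 / 12 ≤ P3f s No α := by
    unfold P3f
    rw [le_div_iff₀ hDpos]
    have e1 : s ^ 2 / 12 * (4 * (No + 1 - α) + 4 * α * s ^ 2) ≤ s ^ 2 / 12 * 12 :=
      mul_le_mul_of_nonneg_left hD (by positivity)
    nlinarith [e1]
  have hP3pos : 0 < P3f s No α := P3_pos hNo hα0.le hα1'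
  have hP2 : P2f c No α ≤ 1 := P2_le_one hNo hα0.le hα1' hc2
  have hP2n : 0 ≤ P2f c No α := P2_nonneg hNo hα0.le hα1' hc2
  have hf2 : (1 - Af σ2 No α) * (P2f c No α + 1 / 2) ≤ 3 * s ^ 3 / 100 := by
    have h1 : (1 - Af σ2 No α) * (P2f c No α + 1 / 2) ≤ (2 * s ^ 3 / 100) * (3 / 2) := by
      apply mul_le_mul (by linarith) (by linarith) (by linarith) (by positivity)
    linarith
  have hf1 : 49 / 50 * (s ^ 2 / 12) ≤ Af σ2 No α * P3f s No α :=
    mul_le_mul hAlb hP3 (by positivity) (by linarith)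
  have harith : 3 * s ^ 3 / 100 < 49 / 50 * (s ^ 2 / 12) := by nlinarith [hs2p, hs3p, hs1, hs]
  unfold gf
  linarith [hf1, hf2, harith]

set_option maxHeartbeats 2000000 in
lemma gf_right {σ2 No s c : ℝ} (hσ : 1 ≤ σ2) (hNo : 0 < No)
    (hs : 0 < s) (hs1 : s ≤ 1) (hc2 : c ^ 2 < 1)
    (hσNo : σ2 * No < 1) (hNs : No < s ^ 2 / 8) :
    gf σ2 No s c (1 - No ^ 2) < 0 := by
  have hs2 : s ^ 2 ≤ 1 := pow_le_one₀ hs.le hs1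
  have hs2p : 0 < s ^ 2 := by positivity
  have hσ0 : 0 < σ2 := by linarith
  have hNo1 : No < 1 := by linarith
  have hNosq : No ^ 2 < No := by nlinarith
  have hα1' : 1 - No ^ 2 < 1 := by nlinarith
  have hα0 : 0 < 1 - No ^ 2 := by nlinarith
  have hxeq : σ2 * (1 - (1 - No ^ 2)) / No = σ2 * No := by
    field_simp; ring
  have hx : 0 < σ2 * No := by positivity
  have hx1 : σ2 * No < 1 := hσNo
  have hL : Real.log 2 < Real.log (1 + σ2 * No) / (σ2 * No) := by
    have h2 := Lanti (mem_Ioi.mpr hx) (mem_Ioi.mpr (by norm_num : (0:ℝ) < 1)) hx1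
    dsimp only at h2
    have h3 : Real.log (1 + 1) / 1 = Real.log 2 := by norm_num
    rw [h3] at h2
    exact h2
  have hAeq := Af_eq (σ2 := σ2) (No := No) (α := 1 - No ^ 2) hσ0 hNo hα1'
  rw [hxeq] at hAeq
  have hA : Af σ2 No (1 - No ^ 2) < 1 / 2 := by
    rw [hAeq]
    have h1 : Real.exp (-(Real.log (1 + σ2 * No) / (σ2 * No))) < Real.exp (-(Real.log 2)) := by
      apply Real.exp_lt_exp.mpr
      linarith
    have h2 : Real.exp (-(Real.log 2)) = 1 / 2 := by
      rw [Real.exp_neg, Real.exp_log (by norm_num : (0:ℝ) < 2)]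
      norm_num
    linarith
  have hApos : 0 < Af σ2 No (1 - No ^ 2) := Af_pos hσ0 hNo hα1'
  have hP2n : 0 ≤ P2f c No (1 - No ^ 2) := P2_nonneg hNo hα0.le hα1' hc2
  have hf2 : (1 : ℝ) / 4 ≤ (1 - Af σ2 No (1 - No ^ 2)) * (P2f c No (1 - No ^ 2) + 1 / 2) := by
    have h1 : (1 : ℝ) / 2 * (1 / 2) ≤
        (1 - Af σ2 No (1 - No ^ 2)) * (P2f c No (1 - No ^ 2) + 1 / 2) := by
      apply mul_le_mul (by linarith) (by linarith) (by norm_num) (by linarith)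
    linarith
  have hα2half : (1 : ℝ) / 2 ≤ 1 - No ^ 2 := by nlinarith
  have hX : No + 1 - (1 - No ^ 2) ≤ 2 * No := by nlinarith
  have hXpos : 0 < No + 1 - (1 - No ^ 2) := by nlinarith
  have hP3 : P3f s No (1 - No ^ 2) ≤ 2 * No / s ^ 2 := by
    unfold P3f
    rw [div_le_div_iff₀ (by nlinarith [hs2p]) (by positivity)]
    have e1 : (No + 1 - (1 - No ^ 2)) * s ^ 2 ≤ (2 * No) * s ^ 2 :=
      mul_le_mul_of_nonneg_right hX (by positivity)
    have e3 : 2 * No * (2 * s ^ 2) ≤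
        2 * No * (4 * (No + 1 - (1 - No ^ 2)) + 4 * (1 - No ^ 2) * s ^ 2) := by
      apply mul_le_mul_of_nonneg_left _ (by positivity)
      have e2 : 2 * s ^ 2 ≤ 4 * (1 - No ^ 2) * s ^ 2 := by
        apply mul_le_mul_of_nonneg_right (by linarith : (2:ℝ) ≤ 4 * (1 - No ^ 2)) (sq_nonneg s)
      linarith
    nlinarith [e1, e3]
  have hP3pos : 0 < P3f s No (1 - No ^ 2) := P3_pos hNo hα0.le hα1'
  have hf1 : Af σ2 No (1 - No ^ 2) * P3f s No (1 - No ^ 2) ≤ 2 * No / s ^ 2 := by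
    have h1 : Af σ2 No (1 - No ^ 2) * P3f s No (1 - No ^ 2) ≤ 1 * P3f s No (1 - No ^ 2) := by
      apply mul_le_mul_of_nonneg_right _ hP3pos.le
      have := Af_lt_one hσ0 hNo hα1'
      linarith
    rw [one_mul] at h1
    linarith
  have hsmall : 2 * No / s ^ 2 < 1 / 4 := by
    rw [div_lt_div_iff₀ (by positivity) (by norm_num)]
    linarith
  unfold gf
  linarith [hf1, hf2, hsmall]

lemma gf_contOn {σ2 No s c a b : ℝ} (hσ0 : 0 < σ2) (hNo : 0 < No)
    (hc2 : c ^ 2 < 1) (h0 : 0 < a) (h1 : b < 1) :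
    ContinuousOn (gf σ2 No s c) (Set.Icc a b) := by
  have hsub : Set.Icc a b ⊆ Set.Ioo 0 1 := fun y hy =>
    ⟨lt_of_lt_of_le h0 hy.1, lt_of_le_of_lt hy.2 h1⟩
  have hxc : Continuous (fun α : ℝ => σ2 * (1 - α) / No) :=
    (by fun_prop : Continuous fun α : ℝ => σ2 * (1 - α)).div_const No
  have hxpos : ∀ y ∈ Set.Icc a b, 0 < σ2 * (1 - y) / No := by
    intro y hy
    obtain ⟨hy0, hy1⟩ := hsub hy
    have : 0 < 1 - y := by linarith
    positivity
  have hA : ContinuousOn (Af σ2 No) (Set.Icc a b) := by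
    apply ContinuousOn.congr
      (f := fun α => Real.exp (-(Real.log (1 + σ2 * (1 - α) / No) / (σ2 * (1 - α) / No))))
    · have hlc : ContinuousOn (fun α : ℝ => Real.log (1 + σ2 * (1 - α) / No)) (Set.Icc a b) := by
        apply ContinuousOn.log
        · exact (continuous_const.add hxc).continuousOn
        · intro y hy
          have := hxpos y hy
          positivity
      exact Real.continuous_exp.comp_continuousOn
        ((hlc.div hxc.continuousOn (fun y hy => ne_of_gt (hxpos y hy))).neg)
    · intro y hy
      exact Af_eq hσ0 hNo (hsub hy).2
  have hP3 : ContinuousOn (fun α => P3f s No α) (Set.Icc a b) := by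
    unfold P3f
    apply ContinuousOn.div (by fun_prop) (by fun_prop)
    intro y hy
    obtain ⟨hy0, hy1⟩ := hsub hy
    have h2 : 0 < No + 1 - y := by linarith
    have h3 : 0 ≤ 4 * y * s ^ 2 :=
      mul_nonneg (mul_nonneg (by norm_num) hy0.le) (sq_nonneg s)
    exact ne_of_gt (by linarith)
  have hd2cont : Continuous (fun α : ℝ => d2f c α) := by
    unfold d2f
    fun_prop
  have hP2 : ContinuousOn (fun α => P2f c No α) (Set.Icc a b) := by
    unfold P2f
    apply ContinuousOn.div
    · exact ((continuous_const.mul hd2cont).mul continuous_const).continuousOn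
    · apply ContinuousOn.add ((continuous_const.mul hd2cont).mul continuous_const).continuousOn
      fun_prop
    · intro y hy
      obtain ⟨hy0, hy1⟩ := hsub hy
      have h2 : 0 < d2f c y := d2_pos hy0.le hc2
      have h3 : 0 < No + 1 - y := by linarith
      have h4 : 0 ≤ (No + 1 - y) * (1 - y) ^ 2 := by positivity
      have h5 : 0 < 4 * d2f c y * No ^ 2 := by positivity
      exact ne_of_gt (by linarith)
  unfold gf
  exact (hA.mul hP3).sub ((continuousOn_const.sub hA).mul (hP2.add continuousOn_const))

end UI17

open UI17 in

/-- Theorem 3 of the paper: at sufficiently high SNR, the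
decreasing curve f₁(α) = P₁₁(α)P_{3,avg}(α) and the increasing curve
f₂(α) = P₁₀(α)(P^c_{2,avg}(α) + 1/2) intersect at exactly one α* ∈ (0,1). -/
theorem unique_intersection (M : ℕ) (hM : 2 ≤ M) (σ2 : ℝ) (hσ : 1 ≤ σ2) :
    ∃ Nstar : ℝ, 0 < Nstar ∧ ∀ No : ℝ, 0 < No → No < Nstar →
      ∃! α : ℝ, α ∈ Set.Ioo (0 : ℝ) 1 ∧
        (let P11 := (No / (No + σ2 * (1 - α))) ^ (No / (σ2 * (1 - α)))
         let P10 := 1 - P11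
         let P3avg := 2 * (No + 1 - α) /
            (4 * (No + 1 - α) + 4 * α * Real.sin (Real.pi / M) ^ 2)
         let d2 := 1 + α - 2 * Real.sqrt α * Real.cos (Real.pi / M)
         let P2cavg := 4 * d2 * No ^ 2 /
            (4 * d2 * No ^ 2 + (No + 1 - α) * (1 - α) ^ 2)
         P11 * P3avg = P10 * (P2cavg + 1 / 2)) := by
  have hσ0 : 0 < σ2 := by linarith
  set s := Real.sin (Real.pi / M) with hsdef
  set c := Real.cos (Real.pi / M) with hcdef
  have hM0 : (0:ℝ) < M := by positivity
  have hM2 : (2:ℝ) ≤ M := by exact_mod_cast hM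
  have hangle0 : 0 < Real.pi / M := by positivity
  have hangle2 : Real.pi / M ≤ Real.pi / 2 :=
    div_le_div_of_nonneg_left Real.pi_pos.le (by norm_num) hM2
  have hanglelt : Real.pi / M < Real.pi := by
    have := Real.pi_pos
    calc Real.pi / M ≤ Real.pi / 2 := hangle2
    _ < Real.pi := by linarith
  have hs : 0 < s := Real.sin_pos_of_pos_of_lt_pi hangle0 hanglelt
  have hs1 : s ≤ 1 := Real.sin_le_one _
  have hc : 0 ≤ c := Real.cos_nonneg_of_mem_Icc ⟨by linarith, hangle2⟩
  have hcs : s ^ 2 = 1 - c ^ 2 := by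
    have := Real.sin_sq_add_cos_sq (Real.pi / M)
    rw [← hsdef, ← hcdef] at this
    linarith
  have hc2 : c ^ 2 < 1 := by nlinarith
  refine ⟨min (s ^ 8 / 20000) (1 / σ2), lt_min (by positivity) (by positivity), ?_⟩
  intro No hNo hNolt
  have hNs8 : No < s ^ 8 / 20000 := lt_of_lt_of_le hNolt (min_le_left _ _)
  have hNinv : No < 1 / σ2 := lt_of_lt_of_le hNolt (min_le_right _ _)
  have hσNo : σ2 * No < 1 := by
    rw [lt_div_iff₀ hσ0] at hNinv
    linarith [hNinv]
  have hs8le : s ^ 8 ≤ s ^ 2 := by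
    apply pow_le_pow_of_le_one hs.le hs1
    norm_num
  have hNs2 : No < s ^ 2 / 8 := by
    have h1 : s ^ 2 / 20000 ≤ s ^ 2 / 8 := by
      have : 0 < s ^ 2 := by positivity
      apply div_le_div_of_nonneg_left this.le (by norm_num) (by norm_num)
    linarith
  have hNo1 : No < 1 := by
    have : s ^ 2 ≤ 1 := pow_le_one₀ hs.le hs1
    linarith
  -- the two endpoints
  set α₁ : ℝ := (1 + c ^ 2) / 2 with hα₁def
  set α₂ : ℝ := 1 - No ^ 2 with hα₂def
  have hα₁pos : 0 < α₁ := by rw [hα₁def]; positivity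
  have hα₁lt1 : α₁ < 1 := by rw [hα₁def]; linarith
  have hα₂lt1 : α₂ < 1 := by rw [hα₂def]; nlinarith
  have hα12 : α₁ ≤ α₂ := by
    rw [hα₁def, hα₂def]
    nlinarith
  have hcα₁ : c ^ 2 ≤ α₁ := by rw [hα₁def]; nlinarith
  -- endpoint signs
  have hgL : 0 < gf σ2 No s c α₁ :=
    gf_left hσ hNo hs hs1 hcs hNs8 hα₁pos (le_of_eq hα₁def)
  have hgR : gf σ2 No s c α₂ < 0 := by
    rw [hα₂def]
    exact gf_right hσ hNo hs hs1 hc2 hσNo hNs2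
  -- IVT
  have hcont : ContinuousOn (gf σ2 No s c) (Set.Icc α₁ α₂) :=
    gf_contOn hσ0 hNo hc2 hα₁pos hα₂lt1
  have h0mem : (0:ℝ) ∈ Set.Icc (gf σ2 No s c α₂) (gf σ2 No s c α₁) := ⟨hgR.le, hgL.le⟩
  obtain ⟨ζ, hζmem, hζ0⟩ := intermediate_value_Icc' hα12 hcont h0mem
  have hζ1 : ζ < 1 := lt_of_le_of_lt hζmem.2 hα₂lt1
  have hζpos : 0 < ζ := lt_of_lt_of_le hα₁pos hζmem.1
  have hζα₁ : α₁ < ζ := by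
    rcases lt_or_eq_of_le hζmem.1 with h | h
    · exact h
    · exfalso; rw [h] at hgL; rw [hζ0] at hgL; exact lt_irrefl 0 hgL
  -- reduce the statement to gf = 0
  suffices h : ∃! α : ℝ, α ∈ Set.Ioo (0 : ℝ) 1 ∧
      Af σ2 No α * P3f s No α = (1 - Af σ2 No α) * (P2f c No α + 1 / 2) by
    exact h
  have hbridge : ∀ y : ℝ,
      (Af σ2 No y * P3f s No y = (1 - Af σ2 No y) * (P2f c No y + 1 / 2))
        ↔ gf σ2 No s c y = 0 := by
    intro y
    have hgy : gf σ2 No s c y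
        = Af σ2 No y * P3f s No y - (1 - Af σ2 No y) * (P2f c No y + 1 / 2) := rfl
    rw [hgy, sub_eq_zero]
  refine ⟨ζ, ⟨⟨hζpos, hζ1⟩, (hbridge ζ).mpr hζ0⟩, ?_⟩
  rintro y ⟨⟨hy0, hy1⟩, hyeq⟩
  have hgy0 : gf σ2 No s c y = 0 := (hbridge y).mp hyeq
  have hyα₁ : α₁ < y := by
    by_contra hle
    push_neg at hle
    have := gf_left (c := c) hσ hNo hs hs1 hcs hNs8 hy0 (hα₁def ▸ hle)
    rw [hgy0] at this
    exact lt_irrefl 0 this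
  rcases lt_trichotomy y ζ with h | h | h
  · exfalso
    have := gf_anti hσ0 hNo hs hc2 hc (le_trans hcα₁ hyα₁.le) hy0 h hζ1
    rw [hgy0, hζ0] at this
    exact lt_irrefl 0 this
  · exact h
  · exfalso
    have := gf_anti hσ0 hNo hs hc2 hc (le_trans hcα₁ hζα₁.le) hζpos h hy1
    rw [hgy0, hζ0] at this
    exact lt_irrefl 0 this
end
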